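/- arXiv:2407.02660 — 6 statements merged into one kernel-verified Lean document; each statement's English description precedes it below -/
import Mathlib

section
/- The Lead or Delay map δ is a right action of the monoid A*×A* on the set H_A: for every h ∈ H_A, δ(h,(ε,ε)) = h, and for all f,f',g,g' ∈ A*, δ(δ(h,(f,g)),(f',g')) = δ(h,(ff',gg')). -/
/-- Words over the alphabet `A`, i.e. elements of the free monoid `A*`. -/
abbrev Word (A : Type) := List A

/-- The set `H_A = (A* × {ε}) ∪ ({ε} × A*) ∪ {𝟎}`, encoded inside
`Option (A* × A*)`, where `none` is the absorbing element `𝟎` and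
`some (h_l, h_r)` is the pair `(h_l, h_r)`. -/
abbrev LD (A : Type) := Option (Word A × Word A)

/-- `h` belongs to `H_A`: it is `𝟎` or one of its two components is the empty word. -/
def LD.inHA {A : Type} (h : LD A) : Prop := ∀ p ∈ h, p.1 = [] ∨ p.2 = []

open Classical in
/-- The lead-or-delay map `δ : H_A × (A* × A*) → H_A`. -/
noncomputable def ldAct {A : Type} (h : LD A) (p : Word A × Word A) : LD A :=
  match h with
  | none => none
  | some (hl, hr) =>
      if (hr ++ p.2) <+: (hl ++ p.1) then
        some ((hl ++ p.1).drop (hr ++ p.2).length, ([] : Word A))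
      else if (hl ++ p.1) <+: (hr ++ p.2) then
        some (([] : Word A), (hr ++ p.2).drop (hl ++ p.1).length)
      else none

/-!
Feeding `(f, g)` to `(x, y)` amounts to reducing the pair `(x ++ f, y ++ g)`: cancel its longest
common prefix, which is the shorter word when the two words are comparable for the prefix order, and
give `𝟎` otherwise. Cancelling a common prefix does not change how a pair acts, so reducing before or
after appending more letters gives the same result, which is the action law. Elements of `H_A` are
already reduced, so `(ε, ε)` acts trivially on them.
-/

namespace LD

variable {A : Type}

lemma ldAct_some (x y f g : Word A) :
    ldAct (some (x, y)) (f, g) = ldAct (some (x ++ f, y ++ g)) ([], []) := by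
  classical
  simp [ldAct]

lemma ldAct_some_append_left (z x y : Word A) (p : Word A × Word A) :
    ldAct (some (z ++ x, z ++ y)) p = ldAct (some (x, y)) p := by
  have drop_cancel : ∀ u v : Word A, (z ++ u).drop (z ++ v).length = u.drop v.length := by
    intro u v
    rw [List.length_append]
    exact List.drop_length_add_append v.length
  classical
  simp only [ldAct, List.append_assoc, List.prefix_append_right_inj, drop_cancel]

lemma not_prefix_append_of_incomparable {x y : Word A} (hxy : ¬ x <+: y) (hyx : ¬ y <+: x)
    (f g : Word A) : ¬ x ++ f <+: y ++ g := by
  intro h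
  rcases le_total x.length y.length with hle | hle
  · exact hxy (List.prefix_of_prefix_length_le ((List.prefix_append x f).trans h)
      (List.prefix_append y g) hle)
  · exact hyx (List.prefix_of_prefix_length_le (List.prefix_append y g)
      ((List.prefix_append x f).trans h) hle)

lemma ldAct_eq_none_of_incomparable {x y : Word A} (hxy : ¬ x <+: y) (hyx : ¬ y <+: x)
    (p : Word A × Word A) : ldAct (some (x, y)) p = none := by
  simp [ldAct, not_prefix_append_of_incomparable hxy hyx,
    not_prefix_append_of_incomparable hyx hxy]

lemma ldAct_lead_nil (d : Word A) : ldAct (some (d, [])) ([], []) = some (d, []) := by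
  simp [ldAct]

lemma ldAct_delay_nil (d : Word A) : ldAct (some ([], d)) ([], []) = some ([], d) := by
  cases d <;> simp [ldAct]

lemma ldAct_nil_of_inHA {h : LD A} (hh : h.inHA) : ldAct h ([], []) = h := by
  rcases h with _ | ⟨x, y⟩
  · rfl
  · rcases hh (x, y) rfl with rfl | rfl
    · exact ldAct_delay_nil y
    · exact ldAct_lead_nil x

lemma ldAct_ldAct_nil (x y : Word A) (p : Word A × Word A) :
    ldAct (ldAct (some (x, y)) ([], [])) p = ldAct (some (x, y)) p := by
  by_cases hyx : y <+: x
  · obtain ⟨d, rfl⟩ := hyx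
    have hlead := ldAct_some_append_left y d [] ([], [])
    rw [List.append_nil, ldAct_lead_nil] at hlead
    rw [hlead, ← ldAct_some_append_left y d [] p, List.append_nil]
  by_cases hxy : x <+: y
  · obtain ⟨d, rfl⟩ := hxy
    have hdelay := ldAct_some_append_left x [] d ([], [])
    rw [List.append_nil, ldAct_delay_nil] at hdelay
    rw [hdelay, ← ldAct_some_append_left x [] d p, List.append_nil]
  rw [ldAct_eq_none_of_incomparable hxy hyx, ldAct_eq_none_of_incomparable hxy hyx]
  rfl

end LD

open LD in
/-- The lead-or-delay map `δ` is a right action of the monoid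
`A* × A*` on `H_A`. -/
theorem ld_is_right_action {A : Type} (h : LD A) (hh : LD.inHA h) :
    ldAct h ([], []) = h ∧
    ∀ f f' g g' : Word A,
      ldAct (ldAct h (f, g)) (f', g') = ldAct h (f ++ f', g ++ g') := by
  refine ⟨ldAct_nil_of_inHA hh, fun f f' g g' => ?_⟩
  rcases h with _ | ⟨x, y⟩
  · rfl
  · rw [ldAct_some x y f g, ldAct_ldAct_nil, ldAct_some, ldAct_some x y, List.append_assoc,
      List.append_assoc]
end

section
/- The Lead or Delay action δ is semi-injective: for all X, Y ∈ H_A and all f,g ∈ A*, if δ(X,(f,g)) = δ(Y,(f,g)) and this common value is different from 𝟎, then X = Y. -/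
lemma ld_key {A : Type} {xl xr yl yr f w : Word A}
    (hx : xl ++ f = xr ++ w) (hy : yl ++ f = yr ++ w)
    (hXe : xl = [] ∨ xr = []) (hYe : yl = [] ∨ yr = []) :
    xl = yl ∧ xr = yr := by
  rcases hXe with hXe | hXe <;> rcases hYe with hYe | hYe <;> subst hXe <;> subst hYe <;>
    simp only [List.nil_append, List.append_nil] at *
  · exact ⟨trivial, List.append_cancel_right (hx.symm.trans hy)⟩
  · rw [← hy, ← List.append_assoc] at hx
    have hlen := congrArg List.length hx
    simp at hlen
    have h1 : xr = [] := List.eq_nil_of_length_eq_zero (by omega)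
    have h2 : yl = [] := List.eq_nil_of_length_eq_zero (by omega)
    exact ⟨h2.symm, h1⟩
  · rw [← hx, ← List.append_assoc] at hy
    have hlen := congrArg List.length hy
    simp at hlen
    have h1 : yr = [] := List.eq_nil_of_length_eq_zero (by omega)
    have h2 : xl = [] := List.eq_nil_of_length_eq_zero (by omega)
    exact ⟨h2, h1.symm⟩
  · exact ⟨List.append_cancel_right (hx.trans hy.symm), trivial⟩

lemma ld_drop {A : Type} {a b : Word A} (h : a <+: b) :
    b = a ++ b.drop a.length := by
  obtain ⟨t, ht⟩ := h
  subst ht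
  rw [List.drop_left]

/-- The lead-or-delay action is semi-injective: if
`δ(X,(f,g)) = δ(Y,(f,g))` and this common value is not `𝟎`, then `X = Y`. -/
theorem ld_semi_injective {A : Type} (X Y : LD A) (hX : LD.inHA X) (hY : LD.inHA Y)
    (f g : Word A) (heq : ldAct X (f, g) = ldAct Y (f, g))
    (hne : ldAct X (f, g) ≠ none) : X = Y := by
  match X, Y with
  | none, _ => exact absurd rfl hne
  | some (xl, xr), none => exact absurd heq hne
  | some (xl, xr), some (yl, yr) =>
    have hXe : xl = [] ∨ xr = [] := hX (xl, xr) rfl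
    have hYe : yl = [] ∨ yr = [] := hY (yl, yr) rfl
    simp only [ldAct] at heq hne
    split at heq <;> rename_i hx1
    · have hxd := ld_drop hx1
      split at heq <;> rename_i hy1
      · have hyd := ld_drop hy1
        rw [Option.some.injEq, Prod.mk.injEq] at heq
        rw [heq.1] at hxd
        have := ld_key (f := f) (w := g ++ (yl ++ f).drop (yr ++ g).length)
          (by rw [← List.append_assoc]; exact hxd)
          (by rw [← List.append_assoc]; exact hyd) hXe hYe
        rw [this.1, this.2]
      · split at heq <;> rename_i hy2
        · rw [Option.some.injEq, Prod.mk.injEq] at heq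
          have hyd := ld_drop hy2
          rw [← heq.2, List.append_nil] at hyd
          rw [heq.1, List.append_nil] at hxd
          have := ld_key (f := f) (w := g) hxd hyd.symm hXe hYe
          rw [this.1, this.2]
        · exact absurd heq (by simp)
    · split at heq <;> rename_i hx2
      · have hxd := ld_drop hx2
        split at heq <;> rename_i hy1
        · rw [Option.some.injEq, Prod.mk.injEq] at heq
          have hyd := ld_drop hy1
          rw [← heq.1, List.append_nil] at hyd
          rw [heq.2, List.append_nil] at hxd
          have := ld_key (f := f) (w := g) hxd.symm hyd hXe hYe
          rw [this.1, this.2]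
        · split at heq <;> rename_i hy2
          · have hyd := ld_drop hy2
            rw [Option.some.injEq, Prod.mk.injEq] at heq
            rw [heq.2] at hxd
            have := ld_key (f := g) (w := f ++ (yr ++ g).drop (yl ++ f).length)
              (by rw [← List.append_assoc]; exact hxd)
              (by rw [← List.append_assoc]; exact hyd) hXe.symm hYe.symm
            rw [this.2, this.1]
          · exact absurd heq (by simp)
      · rw [if_neg hx1, if_neg hx2] at hne
        exact absurd rfl hne
end

section
/- The bidimensional Lead or Delay map Δ satisfies: (i) Δ is a right action of the monoid (A*×A*)×(A*×A*) on H_A×H_A; (ii) the stabilizer of ((ε,ε),(ε,ε)) under Δ is the set {((v,w),(v,w)) : v,w ∈ A*}; (iii) semi-injectivity: if Δ(X,((f',g'),(f'',g''))) = Δ(Y,((f',g'),(f'',g''))) and neither coordinate of this common value is 𝟎, then X = Y. -/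
/-- The bidimensional lead-or-delay map
`Δ((h',h''),((f',g'),(f'',g''))) = (δ(h',(f',f'')), δ(h'',(g',g'')))`. -/
noncomputable def lddAct {A : Type} (h : LD A × LD A)
    (p : (Word A × Word A) × (Word A × Word A)) : LD A × LD A :=
  (ldAct h.1 (p.1.1, p.2.1), ldAct h.2 (p.1.2, p.2.2))

/-! `δ((h_l, h_r), (f, g))` depends only on the words `h_l f` and `h_r g`: it is what remains of
this pair after cancelling its longest common prefix (`leadDelay`). Cancelling a prefix commutes
with appending words on the right, and two incomparable words stay incomparable, which gives the
action law. A non-`𝟎` value `(x, y)` of `δ((h_l, h_r), (f, g))` records the word identity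
`h_l f y = h_r g x`; as one of `h_l`, `h_r` is empty, comparing lengths and cancelling on the right
recovers `(h_l, h_r)`, which is semi-injectivity. -/

section LeadDelay

variable {A : Type}

open Classical in
noncomputable def leadDelay (u v : Word A) : LD A :=
  if v <+: u then some (u.drop v.length, [])
  else if u <+: v then some ([], v.drop u.length)
  else none

theorem ldAct_some (hl hr f g : Word A) :
    ldAct (some (hl, hr)) (f, g) = leadDelay (hl ++ f) (hr ++ g) := rfl

theorem leadDelay_append_append (c u v : Word A) :
    leadDelay (c ++ u) (c ++ v) = leadDelay u v := by
  unfold leadDelay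
  split_ifs <;> simp_all [List.drop_length_add_append]

theorem leadDelay_nil_left (v : Word A) : leadDelay [] v = some ([], v) := by
  by_cases hv : v = [] <;> simp [leadDelay, hv]

theorem leadDelay_nil_right (u : Word A) : leadDelay u [] = some (u, []) := by
  simp [leadDelay]

theorem leadDelay_append_left (u t : Word A) : leadDelay (u ++ t) u = some (t, []) := by
  simpa [leadDelay_nil_right] using leadDelay_append_append u t []

theorem leadDelay_append_right (u t : Word A) : leadDelay u (u ++ t) = some ([], t) := by
  simpa [leadDelay_nil_left] using leadDelay_append_append u [] t

theorem leadDelay_of_incomparable {u v : Word A} (hvu : ¬ v <+: u) (huv : ¬ u <+: v) :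
    leadDelay u v = none := by
  simp [leadDelay, hvu, huv]

theorem not_append_prefix_append {u v : Word A} (hvu : ¬ v <+: u) (huv : ¬ u <+: v)
    (f g : Word A) : ¬ v ++ g <+: u ++ f := fun h =>
  (List.prefix_or_prefix_of_prefix ((v.prefix_append g).trans h) (u.prefix_append f)).elim
    hvu huv

theorem ldAct_leadDelay (u v f g : Word A) :
    ldAct (leadDelay u v) (f, g) = leadDelay (u ++ f) (v ++ g) := by
  by_cases hvu : v <+: u
  · obtain ⟨t, rfl⟩ := hvu
    rw [leadDelay_append_left, ldAct_some, List.append_assoc, leadDelay_append_append,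
      List.nil_append]
  by_cases huv : u <+: v
  · obtain ⟨t, rfl⟩ := huv
    rw [leadDelay_append_right, ldAct_some, List.append_assoc, leadDelay_append_append,
      List.nil_append]
  rw [leadDelay_of_incomparable hvu huv, leadDelay_of_incomparable
    (not_append_prefix_append hvu huv f g) (not_append_prefix_append huv hvu g f)]
  rfl

theorem ldAct_ldAct (h : LD A) (f g f₁ g₁ : Word A) :
    ldAct (ldAct h (f, g)) (f₁, g₁) = ldAct h (f ++ f₁, g ++ g₁) := by
  rcases h with _ | ⟨hl, hr⟩
  · rfl
  · simp only [ldAct_some, ldAct_leadDelay, List.append_assoc]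

theorem ldAct_nil_nil {h : LD A} (hH : h.inHA) : ldAct h ([], []) = h := by
  rcases h with _ | ⟨hl, hr⟩
  · rfl
  · rw [ldAct_some, List.append_nil, List.append_nil]
    rcases hH _ rfl with rfl | rfl
    · exact leadDelay_nil_left hr
    · exact leadDelay_nil_right hl

theorem append_eq_append_of_leadDelay_eq_some {u v x y : Word A}
    (h : leadDelay u v = some (x, y)) : u ++ y = v ++ x := by
  unfold leadDelay at h
  split_ifs at h with hvu huv <;> simp only [Option.some.injEq, Prod.mk.injEq] at h <;>
    obtain ⟨rfl, rfl⟩ := h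
  · simpa using (List.prefix_iff_eq_append.mp hvu).symm
  · simpa using List.prefix_iff_eq_append.mp huv

theorem leadDelay_eq_some_nil_nil_iff {u v : Word A} :
    leadDelay u v = some ([], []) ↔ u = v := by
  refine ⟨fun h => by simpa using append_eq_append_of_leadDelay_eq_some h, ?_⟩
  rintro rfl
  simpa using leadDelay_append_left u []

theorem eq_of_append_eq_append_of_balanced {hl hr hl' hr' s t : Word A}
    (h : hl = [] ∨ hr = []) (h' : hl' = [] ∨ hr' = [])
    (e : hl ++ s = hr ++ t) (e' : hl' ++ s = hr' ++ t) : hl = hl' ∧ hr = hr' := by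
  have hlen : hl.length + hr'.length = hl'.length + hr.length := by
    have := congrArg List.length e
    have := congrArg List.length e'
    simp only [List.length_append] at *
    omega
  rcases h with rfl | rfl <;> rcases h' with rfl | rfl
  · exact ⟨rfl, List.append_cancel_right (e.symm.trans e')⟩
  · simp only [List.length_nil, zero_add] at hlen
    exact ⟨(List.length_eq_zero_iff.mp (by omega)).symm, List.length_eq_zero_iff.mp (by omega)⟩
  · simp only [List.length_nil, add_zero] at hlen
    exact ⟨List.length_eq_zero_iff.mp (by omega), (List.length_eq_zero_iff.mp (by omega)).symm⟩
  · exact ⟨List.append_cancel_right (e.trans e'.symm), rfl⟩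

theorem eq_of_ldAct_eq_ldAct {h h' : LD A} (hH : h.inHA) (hH' : h'.inHA) {f g : Word A}
    (heq : ldAct h (f, g) = ldAct h' (f, g)) (hne : ldAct h (f, g) ≠ none) : h = h' := by
  obtain ⟨⟨x, y⟩, hxy⟩ := Option.ne_none_iff_exists'.mp hne
  rcases h with _ | ⟨hl, hr⟩
  · exact absurd rfl hne
  rcases h' with _ | ⟨hl', hr'⟩
  · exact absurd (heq.symm.trans hxy) (by simp [ldAct])
  have e := append_eq_append_of_leadDelay_eq_some hxy
  have e' := append_eq_append_of_leadDelay_eq_some (heq.symm.trans hxy)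
  simp only [List.append_assoc] at e e'
  obtain ⟨rfl, rfl⟩ := eq_of_append_eq_append_of_balanced (hH _ rfl) (hH' _ rfl) e e'
  rfl

end LeadDelay

/-- the bidimensional lead-or-delay map `Δ` is a right action of
`(A* × A*) × (A* × A*)` on `H_A × H_A`; the stabilizer of `((ε,ε),(ε,ε))` is
`{((v,w),(v,w)) : v,w ∈ A*}`; and `Δ` is semi-injective. -/
theorem ldd_is_action_stabilizer_semi_injective {A : Type} :
    -- (i) right action
    (∀ h : LD A × LD A, LD.inHA h.1 → LD.inHA h.2 →
      lddAct h ((([] : Word A), ([] : Word A)), (([] : Word A), ([] : Word A))) = h ∧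
      ∀ f' g' f'' g'' f₁' g₁' f₁'' g₁'' : Word A,
        lddAct (lddAct h ((f', g'), (f'', g''))) ((f₁', g₁'), (f₁'', g₁'')) =
          lddAct h ((f' ++ f₁', g' ++ g₁'), (f'' ++ f₁'', g'' ++ g₁''))) ∧
    -- (ii) stabilizer of ((ε,ε),(ε,ε))
    ({p : (Word A × Word A) × (Word A × Word A) |
        lddAct (some ([], []), some ([], [])) p =
          (some (([], []) : Word A × Word A), some (([], []) : Word A × Word A))} =
      {p : (Word A × Word A) × (Word A × Word A) | ∃ v w : Word A, p = ((v, w), (v, w))}) ∧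
    -- (iii) semi-injectivity
    (∀ X Y : LD A × LD A, LD.inHA X.1 → LD.inHA X.2 → LD.inHA Y.1 → LD.inHA Y.2 →
      ∀ p : (Word A × Word A) × (Word A × Word A),
        lddAct X p = lddAct Y p → (lddAct X p).1 ≠ none → (lddAct X p).2 ≠ none →
        X = Y) := by
  refine ⟨fun h h₁ h₂ => ⟨?_, fun _ _ _ _ _ _ _ _ => ?_⟩, ?_, ?_⟩
  · exact Prod.ext (ldAct_nil_nil h₁) (ldAct_nil_nil h₂)
  · exact Prod.ext (ldAct_ldAct _ _ _ _ _) (ldAct_ldAct _ _ _ _ _)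
  · ext ⟨⟨f', g'⟩, ⟨f'', g''⟩⟩
    simp only [Set.mem_ofPred_eq, lddAct, ldAct_some, List.nil_append, Prod.mk.injEq,
      leadDelay_eq_some_nil_nil_iff]
    constructor
    · rintro ⟨rfl, rfl⟩
      exact ⟨f', g', ⟨rfl, rfl⟩, rfl, rfl⟩
    · rintro ⟨v, w, ⟨rfl, rfl⟩, rfl, rfl⟩
      exact ⟨rfl, rfl⟩
  · intro X Y hX₁ hX₂ hY₁ hY₂ p heq hne₁ hne₂
    exact Prod.ext (eq_of_ldAct_eq_ldAct hX₁ hY₁ (congrArg Prod.fst heq) hne₁)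
      (eq_of_ldAct_eq_ldAct hX₂ hY₂ (congrArg Prod.snd heq) hne₂)
end

section
/- Every deterministic splitter is injective: if S is a deterministic splitter and (u,v,s₁) ∈ |S| and (u,v,s₂) ∈ |S| for words u,v ∈ A*, then s₁ = s₂. -/
/-- The generating set `G = {(a,ε,a) : a ∈ A} ∪ {(ε,a,a) : a ∈ A}` of the
Shuffling Monoid. -/
def genG (A : Type) : Set (Word A × Word A × Word A) :=
  {g | ∃ a : A, g = ([a], [], [a]) ∨ g = ([], [a], [a])}

/-- Componentwise product (concatenation) of a list of triples of words. -/
def prodTriple {A : Type} (ls : List (Word A × Word A × Word A)) :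
    Word A × Word A × Word A :=
  ((ls.map fun l => l.1).flatten, (ls.map fun l => l.2.1).flatten,
    (ls.map fun l => l.2.2).flatten)

/-- The Shuffling Monoid `U`: the submonoid of `A* × A* × A*` generated by `G`,
described as the set of all products of finite sequences of generators. -/
def shuffleU (A : Type) : Set (Word A × Word A × Word A) :=
  {m | ∃ ls : List (Word A × Word A × Word A), (∀ l ∈ ls, l ∈ genG A) ∧ prodTriple ls = m}

/-- A spliffer (equivalently, splitter) over `A`: a finite automaton whose
transitions are labeled by elements of `G`. -/
structure Spliffer (A : Type) where
  Q : Type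
  finQ : Finite Q
  E : Q → (Word A × Word A × Word A) → Q → Prop
  I : Set Q
  T : Set Q
  labels_mem : ∀ {q l q'}, E q l q' → l ∈ genG A

/-- Paths in a spliffer, recording the sequence of labels. -/
inductive Spliffer.Path {A : Type} (S : Spliffer A) :
    S.Q → List (Word A × Word A × Word A) → S.Q → Prop
  | nil (q : S.Q) : Spliffer.Path S q [] q
  | cons {q q' q'' : S.Q} {l : Word A × Word A × Word A}
      {ls : List (Word A × Word A × Word A)} :
      S.E q l q' → Spliffer.Path S q' ls q'' → Spliffer.Path S q (l :: ls) q''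

/-- The behavior `|S|` of a spliffer: products of the label sequences of all
successful runs. -/
def Spliffer.behavior {A : Type} (S : Spliffer A) : Set (Word A × Word A × Word A) :=
  {m | ∃ q ∈ S.I, ∃ q' ∈ S.T, ∃ ls, S.Path q ls q' ∧ prodTriple ls = m}

/-- A splitter is deterministic if it has a single initial state, for every state
and input letter there is at most one outgoing transition reading that letter,
and all transitions leaving a given state write to the same tape. -/
def Spliffer.Deterministic {A : Type} (S : Spliffer A) : Prop :=
  (∃! i, i ∈ S.I) ∧
  (∀ ⦃q l₁ q₁ l₂ q₂⦄, S.E q l₁ q₁ → S.E q l₂ q₂ → l₁.2.2 = l₂.2.2 → l₁ = l₂ ∧ q₁ = q₂) ∧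
  (∀ ⦃q l₁ q₁ l₂ q₂⦄, S.E q l₁ q₁ → S.E q l₂ q₂ →
    (l₁.1 = [] ∧ l₂.1 = []) ∨ (l₁.2.1 = [] ∧ l₂.2.1 = []))

lemma prodTriple_cons {A : Type} (l : Word A × Word A × Word A) (ls : List _) :
    prodTriple (l :: ls) = (l.1 ++ (prodTriple ls).1, l.2.1 ++ (prodTriple ls).2.1,
      l.2.2 ++ (prodTriple ls).2.2) := by
  simp [prodTriple]

lemma path_labels_unique {A : Type} (S : Spliffer A) (hdet : S.Deterministic) :
    ∀ {ls₁ : List (Word A × Word A × Word A)} {q p₁ p₂ ls₂},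
      S.Path q ls₁ p₁ → S.Path q ls₂ p₂ →
      (prodTriple ls₁).1 = (prodTriple ls₂).1 →
      (prodTriple ls₁).2.1 = (prodTriple ls₂).2.1 → ls₁ = ls₂ := by
  intro ls₁
  induction ls₁ with
  | nil =>
    intro q p₁ p₂ ls₂ h₁ h₂ hu hv
    cases h₂ with
    | nil => rfl
    | @cons _ q' _ l ls hE hP =>
      obtain ⟨a, ha | ha⟩ := S.labels_mem hE <;>
        simp [prodTriple, ha] at hu hv
  | cons l₁ t₁ ih =>
    intro q p₁ p₂ ls₂ h₁ h₂ hu hv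
    cases h₁ with
    | @cons _ q₁' _ _ _ hE₁ hP₁ =>
    cases h₂ with
    | nil =>
      obtain ⟨a, ha | ha⟩ := S.labels_mem hE₁ <;>
        simp [prodTriple, ha] at hu hv
    | @cons _ q₂' _ l₂ t₂ hE₂ hP₂ =>
      have heq : l₁.2.2 = l₂.2.2 := by
        obtain ⟨a₁, ha₁ | ha₁⟩ := S.labels_mem hE₁ <;>
        obtain ⟨a₂, ha₂ | ha₂⟩ := S.labels_mem hE₂ <;>
        rcases hdet.2.2 hE₁ hE₂ with ⟨e₁, e₂⟩ | ⟨e₁, e₂⟩ <;>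
        simp_all [prodTriple_cons]
      obtain ⟨hl, hq⟩ := hdet.2.1 hE₁ hE₂ heq
      subst hl; subst hq
      rw [prodTriple_cons, prodTriple_cons] at hu hv
      simp only [List.append_cancel_left_eq] at hu hv
      rw [ih hP₁ hP₂ hu hv]

/-- Every deterministic splitter is injective. -/
theorem det_splitter_injective {A : Type} [Finite A] (S : Spliffer A)
    (hdet : S.Deterministic) (u v s₁ s₂ : Word A)
    (h₁ : (u, v, s₁) ∈ S.behavior) (h₂ : (u, v, s₂) ∈ S.behavior) :
    s₁ = s₂ := by
  obtain ⟨i₁, hi₁, f₁, hf₁, ls₁, hp₁, he₁⟩ := h₁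
  obtain ⟨i₂, hi₂, f₂, hf₂, ls₂, hp₂, he₂⟩ := h₂
  obtain ⟨i, _, hiu⟩ := hdet.1
  have : i₁ = i₂ := (hiu i₁ hi₁).trans (hiu i₂ hi₂).symm
  subst this
  have hls : ls₁ = ls₂ := path_labels_unique S hdet hp₁ hp₂
    (by rw [he₁, he₂]) (by rw [he₁, he₂])
  subst hls
  exact congrArg (fun p => p.2.2) (he₁.symm.trans he₂)
end

section
/- Over the alphabet A = {a,b} (a ≠ b), the set L₁ = {(aⁿbaᵐ, aᵐbaˢ, aⁿba^{2m}baˢ) : n,m,s > 0} ⊆ U is the behavior of a deterministic splitter with finitely many states, and likewise the set L₂ = {(aⁱbaʲ, aᵏbaⁱ, aᵏba^{2i}baʲ) : i,j,k > 0} ⊆ U is the behavior of a deterministic splitter with finitely many states. -/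
/-- The set `L₁ = {(aⁿbaᵐ, aᵐbaˢ, aⁿba^{2m}baˢ) : n,m,s > 0}`. -/
def setL1 {A : Type} (a b : A) : Set (Word A × Word A × Word A) :=
  {x | ∃ n m s : ℕ, 0 < n ∧ 0 < m ∧ 0 < s ∧
    x = (List.replicate n a ++ [b] ++ List.replicate m a,
         List.replicate m a ++ [b] ++ List.replicate s a,
         List.replicate n a ++ [b] ++ List.replicate (2 * m) a ++ [b] ++
           List.replicate s a)}

/-- The set `L₂ = {(aⁱbaʲ, aᵏbaⁱ, aᵏba^{2i}baʲ) : i,j,k > 0}`. -/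
def setL2 {A : Type} (a b : A) : Set (Word A × Word A × Word A) :=
  {x | ∃ i j k : ℕ, 0 < i ∧ 0 < j ∧ 0 < k ∧
    x = (List.replicate i a ++ [b] ++ List.replicate j a,
         List.replicate k a ++ [b] ++ List.replicate i a,
         List.replicate k a ++ [b] ++ List.replicate (2 * i) a ++ [b] ++
           List.replicate j a)}

/-- The set `{(aˢbaˢ, aˢbaˢ, aˢba^{2s}baˢ) : s > 0}`. -/
def setLcap {A : Type} (a b : A) : Set (Word A × Word A × Word A) :=
  {x | ∃ s : ℕ, 0 < s ∧
    x = (List.replicate s a ++ [b] ++ List.replicate s a,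
         List.replicate s a ++ [b] ++ List.replicate s a,
         List.replicate s a ++ [b] ++ List.replicate (2 * s) a ++ [b] ++
           List.replicate s a)}

/-!
A deterministic splitter for `L₁` copies `aⁿ` to the first tape, reads `b`, then alternately
sends one `a` to the second tape and one to the first, `m` times, which splits `a^{2m}` into
`aᵐ` and `aᵐ`; finally it sends `b aˢ` to the second tape. Its behavior is computed by writing
down the language accepted from each state and checking that this family solves the language
equations of the automaton; the solution is unique because every transition consumes one
letter of the third tape. Exchanging the first two tapes preserves determinism and maps `L₁`
onto `L₂`.
-/

def appendTapes {A : Type} (x y : Word A × Word A × Word A) : Word A × Word A × Word A :=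
  (x.1 ++ y.1, x.2.1 ++ y.2.1, x.2.2 ++ y.2.2)

def swapTapes {A : Type} (x : Word A × Word A × Word A) : Word A × Word A × Word A :=
  (x.2.1, x.1, x.2.2)

@[simp] lemma swapTapes_swapTapes {A : Type} (x : Word A × Word A × Word A) :
    swapTapes (swapTapes x) = x := rfl

lemma swapTapes_mem_genG {A : Type} {x : Word A × Word A × Word A} (hx : x ∈ genG A) :
    swapTapes x ∈ genG A := by
  obtain ⟨c, rfl | rfl⟩ := hx
  exacts [⟨c, .inr rfl⟩, ⟨c, .inl rfl⟩]

lemma prodTriple_map_swapTapes {A : Type} (ls : List (Word A × Word A × Word A)) :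
    prodTriple (ls.map swapTapes) = swapTapes (prodTriple ls) := by
  simp only [prodTriple, swapTapes, List.map_map]
  rfl

lemma length_third_of_mem_genG {A : Type} {l : Word A × Word A × Word A} (hl : l ∈ genG A) :
    l.2.2.length = 1 := by
  obtain ⟨c, rfl | rfl⟩ := hl <;> rfl

namespace Spliffer

variable {A : Type} {S : Spliffer A}

section LanguageEquations

def SolvesLanguageEquations (S : Spliffer A) (R : S.Q → Set (Word A × Word A × Word A)) :
    Prop :=
  ∀ q x, x ∈ R q ↔ (q ∈ S.T ∧ x = ([], [], [])) ∨
    ∃ l q' y, S.E q l q' ∧ y ∈ R q' ∧ x = appendTapes l y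

variable {R : S.Q → Set (Word A × Word A × Word A)}

lemma prodTriple_mem_of_path (hR : S.SolvesLanguageEquations R) {q q' : S.Q}
    {ls : List (Word A × Word A × Word A)} (hp : S.Path q ls q') (hq' : q' ∈ S.T) :
    prodTriple ls ∈ R q := by
  induction hp with
  | nil q => exact (hR _ _).2 (.inl ⟨hq', rfl⟩)
  | cons e _ ih => exact (hR _ _).2 (.inr ⟨_, _, _, e, ih hq', rfl⟩)

lemma exists_path_of_mem (hR : S.SolvesLanguageEquations R) {q : S.Q}
    {x : Word A × Word A × Word A} (hx : x ∈ R q) :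
    ∃ q' ∈ S.T, ∃ ls, S.Path q ls q' ∧ prodTriple ls = x := by
  induction h : x.2.2.length using Nat.strong_induction_on generalizing q x with
  | _ n ih =>
    rcases (hR q x).1 hx with ⟨hq, rfl⟩ | ⟨l, q', y, e, hy, rfl⟩
    · exact ⟨q, hq, [], .nil q, rfl⟩
    · have hy_short : y.2.2.length < n := by
        simp [← h, appendTapes, length_third_of_mem_genG (S.labels_mem e)]
      obtain ⟨q'', hq'', ls, hp, rfl⟩ := ih _ hy_short hy rfl
      exact ⟨q'', hq'', l :: ls, .cons e hp, rfl⟩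

theorem behavior_eq_of_solvesLanguageEquations (hR : S.SolvesLanguageEquations R) {i : S.Q}
    (hI : S.I = {i}) : S.behavior = R i := by
  ext x
  constructor
  · rintro ⟨q, hq, q', hq', ls, hp, rfl⟩
    rw [hI] at hq
    exact hq ▸ prodTriple_mem_of_path hR hp hq'
  · intro hx
    exact ⟨i, hI ▸ rfl, exists_path_of_mem hR hx⟩

end LanguageEquations

section Swap

def swap (S : Spliffer A) : Spliffer A where
  Q := S.Q
  finQ := S.finQ
  E q l q' := S.E q (swapTapes l) q'
  I := S.I
  T := S.T
  labels_mem h := by simpa using swapTapes_mem_genG (S.labels_mem h)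

lemma Path.of_swap {q q' : S.swap.Q} {ls : List (Word A × Word A × Word A)}
    (h : S.swap.Path q ls q') : S.Path q (ls.map swapTapes) q' := by
  induction h with
  | nil q => exact .nil (S := S) q
  | cons e _ ih => exact .cons e ih

lemma Path.swap {q q' : S.Q} {ls : List (Word A × Word A × Word A)}
    (h : S.Path q ls q') : S.swap.Path q (ls.map swapTapes) q' := by
  induction h with
  | nil q => exact .nil (S := S.swap) q
  | cons e _ ih => exact .cons (S := S.swap) (by simpa [Spliffer.swap] using e) ih

lemma behavior_swap (S : Spliffer A) : S.swap.behavior = swapTapes ⁻¹' S.behavior := by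
  ext x
  constructor
  · rintro ⟨q, hq, q', hq', ls, hp, rfl⟩
    exact ⟨q, hq, q', hq', ls.map swapTapes, hp.of_swap, prodTriple_map_swapTapes ls⟩
  · rintro ⟨q, hq, q', hq', ls, hp, hx⟩
    refine ⟨q, hq, q', hq', ls.map swapTapes, hp.swap, ?_⟩
    rw [prodTriple_map_swapTapes, hx, swapTapes_swapTapes]

lemma Deterministic.swap (h : S.Deterministic) : S.swap.Deterministic := by
  obtain ⟨hI, hread, htape⟩ := h
  refine ⟨hI, fun q l₁ q₁ l₂ q₂ e₁ e₂ h₃ => ?_, fun q l₁ q₁ l₂ q₂ e₁ e₂ => (htape e₁ e₂).symm⟩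
  obtain ⟨hl, hq⟩ := hread e₁ e₂ h₃
  exact ⟨by simpa using congrArg swapTapes hl, hq⟩

end Swap

section OfTable

/-- The generator reading `c` and writing it on the first tape (`true`) or the second one
(`false`). -/
def letterLabel : Bool → A → Word A × Word A × Word A
  | true, c => ([c], [], [c])
  | false, c => ([], [c], [c])

@[simp] lemma letterLabel_third (t : Bool) (c : A) : (letterLabel t c).2.2 = [c] := by
  cases t <;> rfl

/-- State `q` writes on the first tape iff `writesFirst q`, and on reading `c` it may move to
any `q'` with `(c, q') ∈ out q`. -/
def ofTable {Q : Type} [Finite Q] (writesFirst : Q → Bool) (out : Q → List (A × Q)) (i : Q)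
    (T : Set Q) : Spliffer A where
  Q := Q
  finQ := inferInstance
  E q l q' := ∃ c, (c, q') ∈ out q ∧ l = letterLabel (writesFirst q) c
  I := {i}
  T := T
  labels_mem := by
    rintro q - q' ⟨c, -, rfl⟩
    cases writesFirst q
    exacts [⟨c, .inr rfl⟩, ⟨c, .inl rfl⟩]

variable {Q : Type} [Finite Q] {writesFirst : Q → Bool} {out : Q → List (A × Q)} {i : Q}
  {T : Set Q}

theorem deterministic_ofTable (hout : ∀ q, ((out q).map Prod.fst).Nodup) :
    (ofTable writesFirst out i T).Deterministic := by
  refine ⟨⟨i, rfl, fun _ h => h⟩, ?_, ?_⟩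
  · rintro q - q₁ - q₂ ⟨c₁, h₁, rfl⟩ ⟨c₂, h₂, rfl⟩ hc
    obtain rfl : c₁ = c₂ := by simpa using hc
    exact ⟨rfl, (Prod.ext_iff.1 (List.inj_on_of_nodup_map (hout q) h₁ h₂ rfl)).2⟩
  · rintro q - q₁ - q₂ ⟨c₁, -, rfl⟩ ⟨c₂, -, rfl⟩
    cases writesFirst q
    exacts [.inl ⟨rfl, rfl⟩, .inr ⟨rfl, rfl⟩]

lemma solvesLanguageEquations_ofTable {R : Q → Set (Word A × Word A × Word A)}
    (hR : ∀ q x, x ∈ R q ↔ (q ∈ T ∧ x = ([], [], [])) ∨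
      ∃ e ∈ out q, ∃ y ∈ R e.2, x = appendTapes (letterLabel (writesFirst q) e.1) y) :
    (ofTable writesFirst out i T).SolvesLanguageEquations R := by
  intro (q : Q) x
  refine (hR q x).trans (or_congr Iff.rfl ⟨?_, ?_⟩)
  · rintro ⟨e, he, y, hy, rfl⟩
    exact ⟨_, e.2, y, ⟨e.1, he, rfl⟩, hy, rfl⟩
  · rintro ⟨l, q', y, ⟨c, hc, rfl⟩, hy, rfl⟩
    exact ⟨(c, q'), hc, y, hy, rfl⟩

end OfTable

end Spliffer

namespace L1Splitter

open List

variable {A : Type} (a b : A)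

def writesFirst : Fin 7 → Bool
  | 0 | 1 | 3 => true
  | _ => false

def out : Fin 7 → List (A × Fin 7)
  | 0 => [(a, 1)]
  | 1 => [(a, 1), (b, 2)]
  | 2 => [(a, 3)]
  | 3 => [(a, 4)]
  | 4 => [(a, 3), (b, 5)]
  | _ => [(a, 6)]

def splitter : Spliffer A := Spliffer.ofTable writesFirst (out a b) 0 {6}

/-- The language accepted from each state. -/
def residual : Fin 7 → Set (Word A × Word A × Word A)
  | 0 => setL1 a b
  | 1 => {x | ∃ t m s : ℕ, 0 < m ∧ 0 < s ∧
      x = (replicate t a ++ [b] ++ replicate m a, replicate m a ++ [b] ++ replicate s a,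
        replicate t a ++ [b] ++ replicate (2 * m) a ++ [b] ++ replicate s a)}
  | 2 => {x | ∃ m s : ℕ, 0 < m ∧ 0 < s ∧
      x = (replicate m a, replicate m a ++ [b] ++ replicate s a,
        replicate (2 * m) a ++ [b] ++ replicate s a)}
  | 3 => {x | ∃ p s : ℕ, 0 < s ∧
      x = (replicate (p + 1) a, replicate p a ++ [b] ++ replicate s a,
        replicate (2 * p + 1) a ++ [b] ++ replicate s a)}
  | 4 => {x | ∃ p s : ℕ, 0 < s ∧
      x = (replicate p a, replicate p a ++ [b] ++ replicate s a,
        replicate (2 * p) a ++ [b] ++ replicate s a)}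
  | 5 => {x | ∃ s : ℕ, 0 < s ∧ x = ([], replicate s a, replicate s a)}
  | _ => {x | ∃ t : ℕ, x = ([], replicate t a, replicate t a)}

lemma solvesLanguageEquations_residual :
    (splitter a b).SolvesLanguageEquations (residual a b) := by
  refine Spliffer.solvesLanguageEquations_ofTable fun q x => ?_
  fin_cases q <;> simp [out, writesFirst, residual, setL1, Spliffer.letterLabel, appendTapes,
    replicate_succ, Nat.pos_iff_ne_zero, Nat.mul_succ]
  -- at the looping states 1, 4 and 6 the exponent is `0` (leave the loop) or `n + 1` (stay)
  all_goals rw [← Nat.or_exists_add_one]; simp [replicate_succ, Nat.mul_succ]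
  all_goals exact Or.comm

lemma deterministic {a b : A} (hab : a ≠ b) : (splitter a b).Deterministic :=
  Spliffer.deterministic_ofTable fun q => by fin_cases q <;> simp [out, hab]

lemma behavior : (splitter a b).behavior = setL1 a b :=
  Spliffer.behavior_eq_of_solvesLanguageEquations (solvesLanguageEquations_residual a b) rfl

end L1Splitter

lemma setL2_eq_preimage_swapTapes {A : Type} (a b : A) :
    setL2 a b = swapTapes ⁻¹' setL1 a b := by
  ext x
  constructor
  · rintro ⟨i, j, k, hi, hj, hk, rfl⟩
    exact ⟨k, i, j, hk, hi, hj, rfl⟩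
  · rintro ⟨n, m, s, hn, hm, hs, hx⟩
    exact ⟨m, s, n, hm, hs, hn, by rw [← swapTapes_swapTapes x, hx]; rfl⟩

theorem L1_and_L2_are_deterministic_behaviors_general {A : Type} (a b : A) (hab : a ≠ b) :
    (∃ S : Spliffer A, S.Deterministic ∧ S.behavior = setL1 a b) ∧
    (∃ S : Spliffer A, S.Deterministic ∧ S.behavior = setL2 a b) := by
  refine ⟨⟨L1Splitter.splitter a b, L1Splitter.deterministic hab, L1Splitter.behavior a b⟩,
    ⟨(L1Splitter.splitter a b).swap, (L1Splitter.deterministic hab).swap, ?_⟩⟩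
  rw [Spliffer.behavior_swap, L1Splitter.behavior, setL2_eq_preimage_swapTapes]

/-- over `A = {a,b}`, each of `L₁` and `L₂` is the behavior of a
deterministic splitter with finitely many states. -/
theorem L1_and_L2_are_deterministic_behaviors {A : Type} (a b : A) (hab : a ≠ b)
    (hA : ∀ x : A, x = a ∨ x = b) :
    (∃ S : Spliffer A, S.Deterministic ∧ S.behavior = setL1 a b) ∧
    (∃ S : Spliffer A, S.Deterministic ∧ S.behavior = setL2 a b) :=
  L1_and_L2_are_deterministic_behaviors_general a b hab
end

section
/- Characterization of functionality: let S be a splitter and let 𝒜 be the trim part of its square automaton S×S (only states that are both accessible from an initial pair and co-accessible to a final pair, with the induced transitions). For a path in 𝒜 from an initial state with label sequence (a'₁,a''₁,a₁)⋯(a'ₙ,a''ₙ,aₙ), define its Δ-value as ((ε,ε),(ε,ε))·Δ((a'₁,a''₁))·Δ⋯·Δ((a'ₙ,a''ₙ)), where each a'ᵢ,a''ᵢ ∈ A*×A* is the output part of the label. Then S is functional if and only if both: (i) for every state (q',q'') of 𝒜, all paths in 𝒜 from an initial state to (q',q'') have the same Δ-value (so that each state has a well-defined value v(q',q'')); and (ii)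 the value v(t',t'') of every final state (t',t'') of 𝒜 equals ((ε,ε),(ε,ε)). -/
/-- Labels of the square automaton `S × S`: the output pair of the first copy,
the output pair of the second copy, and the common input letter. -/
abbrev SqLbl (A : Type) := (Word A × Word A) × (Word A × Word A) × A

/-- Transitions of the square automaton `S × S`. -/
def sqE {A : Type} (S : Spliffer A) (p : S.Q × S.Q) (l : SqLbl A) (r : S.Q × S.Q) :
    Prop :=
  S.E p.1 (l.1.1, l.1.2, [l.2.2]) r.1 ∧ S.E p.2 (l.2.1.1, l.2.1.2, [l.2.2]) r.2

/-- Paths in the square automaton. -/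
inductive SqPath {A : Type} (S : Spliffer A) :
    S.Q × S.Q → List (SqLbl A) → S.Q × S.Q → Prop
  | nil (p : S.Q × S.Q) : SqPath S p [] p
  | cons {p r r' : S.Q × S.Q} {l : SqLbl A} {ls : List (SqLbl A)} :
      sqE S p l r → SqPath S r ls r' → SqPath S p (l :: ls) r'

/-- Initial states of the square automaton. -/
def sqInit {A : Type} (S : Spliffer A) (p : S.Q × S.Q) : Prop :=
  p.1 ∈ S.I ∧ p.2 ∈ S.I

/-- Final states of the square automaton. -/
def sqFinal {A : Type} (S : Spliffer A) (p : S.Q × S.Q) : Prop :=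
  p.1 ∈ S.T ∧ p.2 ∈ S.T

/-- A state of the square automaton belongs to its trim part `𝒜`: it is
accessible from an initial state and co-accessible to a final state.  (Note that
any path of `S × S` from an initial state to a trim state lies entirely inside
the trim part, so paths of `𝒜` from an initial state to a trim state coincide
with such paths of `S × S`.) -/
def sqTrim {A : Type} (S : Spliffer A) (p : S.Q × S.Q) : Prop :=
  (∃ i, sqInit S i ∧ ∃ ls, SqPath S i ls p) ∧
  (∃ t, sqFinal S t ∧ ∃ ls, SqPath S p ls t)

/-- The `Δ`-value of a path of the square automaton with the given label
sequence: start from `((ε,ε),(ε,ε))` and act by the output parts of the labels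
(the input letter is ignored). -/
noncomputable def dval {A : Type} (ls : List (SqLbl A)) : LD A × LD A :=
  ls.foldl (fun h l => lddAct h (l.1, l.2.1))
    (some (([], []) : Word A × Word A), some (([], []) : Word A × Word A))

namespace FunChar
variable {A : Type}

open Classical in
noncomputable def ld (x y : Word A) : LD A :=
  if y <+: x then some (x.drop y.length, [])
  else if x <+: y then some ([], y.drop x.length) else none

lemma ldAct_none (p : Word A × Word A) : ldAct (none : LD A) p = none := rfl

lemma ldAct_some (hl hr f g : Word A) :
    ldAct (some (hl, hr)) (f, g) = ld (hl ++ f) (hr ++ g) := rfl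

lemma ld_shift (c x y : Word A) : ld (c ++ x) (c ++ y) = ld x y := by
  unfold ld
  by_cases h1 : y <+: x
  · rw [if_pos h1, if_pos ((List.prefix_append_right_inj c).2 h1)]
    simp [List.length_append, List.drop_append]
  · rw [if_neg h1, if_neg (fun hc => h1 ((List.prefix_append_right_inj c).1 hc))]
    by_cases h2 : x <+: y
    · rw [if_pos h2, if_pos ((List.prefix_append_right_inj c).2 h2)]
      simp [List.length_append, List.drop_append]
    · rw [if_neg h2, if_neg (fun hc => h2 ((List.prefix_append_right_inj c).1 hc))]

lemma ld_self (x : Word A) : ld x x = some ([], []) := by simp [ld]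

lemma ld_eq_eps {x y : Word A} (h : ld x y = some ([], [])) : x = y := by
  unfold ld at h
  split_ifs at h with h1 h2
  · obtain ⟨t, ht⟩ := h1
    simp only [← ht, List.drop_left, Option.some.injEq, Prod.mk.injEq] at h
    rw [← ht, h.1, List.append_nil]
  · obtain ⟨t, ht⟩ := h2
    simp only [← ht, List.drop_left, Option.some.injEq, Prod.mk.injEq] at h
    rw [← ht, h.2, List.append_nil]

lemma ld_sound {x y a b : Word A} (h : ld x y = some (a, b)) : y ++ a = x ++ b := by
  unfold ld at h
  split_ifs at h with h1 h2
  · obtain ⟨t, ht⟩ := h1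
    simp only [← ht, List.drop_left, Option.some.injEq, Prod.mk.injEq] at h
    rw [← h.1, ← h.2, ht, List.append_nil]
  · obtain ⟨t, ht⟩ := h2
    simp only [← ht, List.drop_left, Option.some.injEq, Prod.mk.injEq] at h
    rw [← h.1, ← h.2, ht, List.append_nil]

lemma ld_inHA (x y : Word A) : (ld x y).inHA := by
  unfold ld LD.inHA; split_ifs <;> simp

lemma ldAct_inHA (h : LD A) (p : Word A × Word A) : (ldAct h p).inHA := by
  cases h with
  | none => intro q hq; simp [ldAct_none] at hq
  | some hh => rw [show hh = (hh.1, hh.2) from rfl, ldAct_some]; exact ld_inHA _ _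

lemma ldAct_of_ld (x y f g : Word A) :
    ldAct (ld x y) (f, g) = ld (x ++ f) (y ++ g) := by
  by_cases h1 : y <+: x
  · obtain ⟨t, ht⟩ := h1
    have hld : ld x y = some (t, []) := by
      unfold ld; rw [if_pos ⟨t, ht⟩, ← ht, List.drop_left]
    rw [hld, ldAct_some, List.nil_append, ← ht, List.append_assoc, ld_shift]
  · by_cases h2 : x <+: y
    · obtain ⟨t, ht⟩ := h2
      have hld : ld x y = some ([], t) := by
        unfold ld; rw [if_neg h1, if_pos ⟨t, ht⟩, ← ht, List.drop_left]
      rw [hld, ldAct_some, List.nil_append, ← ht, List.append_assoc, ld_shift]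
    · have hld : ld x y = none := by unfold ld; rw [if_neg h1, if_neg h2]
      have hA : ¬ (y ++ g <+: x ++ f) := fun hc => by
        rcases List.prefix_or_prefix_of_prefix ((List.prefix_append y g).trans hc)
          (List.prefix_append x f) with h | h
        · exact h1 h
        · exact h2 h
      have hB : ¬ (x ++ f <+: y ++ g) := fun hc => by
        rcases List.prefix_or_prefix_of_prefix ((List.prefix_append x f).trans hc)
          (List.prefix_append y g) with h | h
        · exact h2 h
        · exact h1 h
      rw [hld, ldAct_none]
      unfold ld; rw [if_neg hA, if_neg hB]

lemma foldl_ldAct (ps : List (Word A × Word A)) (x y : Word A) :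
    ps.foldl ldAct (ld x y)
      = ld (x ++ (ps.map Prod.fst).flatten) (y ++ (ps.map Prod.snd).flatten) := by
  induction ps generalizing x y with
  | nil => simp
  | cons p ps ih =>
    rw [List.foldl_cons, show p = (p.1, p.2) from rfl, ldAct_of_ld, ih]
    simp [List.append_assoc]

lemma ld_inj {h h' : Word A × Word A} {f g : Word A}
    (hH : h.1 = [] ∨ h.2 = []) (hH' : h'.1 = [] ∨ h'.2 = [])
    (heq : ld (h.1 ++ f) (h.2 ++ g) = ld (h'.1 ++ f) (h'.2 ++ g))
    (hs : (ld (h.1 ++ f) (h.2 ++ g)).isSome) : h = h' := by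
  obtain ⟨r, hr⟩ := Option.isSome_iff_exists.1 hs
  obtain ⟨a, b⟩ := r
  have e1 := ld_sound hr
  have e2 := ld_sound (heq ▸ hr)
  rw [List.append_assoc, List.append_assoc] at e1 e2
  have lh : h.2.length + (g ++ a).length = h.1.length + (f ++ b).length := by
    have := congrArg List.length e1; simpa [List.length_append] using this
  have lh' : h'.2.length + (g ++ a).length = h'.1.length + (f ++ b).length := by
    have := congrArg List.length e2; simpa [List.length_append] using this
  rcases hH with h1 | h1 <;> rcases hH' with h2 | h2
  · refine Prod.ext (h1.trans h2.symm) ?_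
    rw [h1] at e1; rw [h2] at e2
    exact (List.append_left_inj _).1 (e1.trans e2.symm)
  · rw [h1] at lh; rw [h2] at lh'
    simp only [List.length_nil] at lh lh'
    have : h.2.length = 0 ∧ h'.1.length = 0 := by omega
    refine Prod.ext ?_ ?_ <;>
      simp [h1, h2, List.eq_nil_of_length_eq_zero this.1,
        List.eq_nil_of_length_eq_zero this.2]
  · rw [h1] at lh; rw [h2] at lh'
    simp only [List.length_nil] at lh lh'
    have : h.1.length = 0 ∧ h'.2.length = 0 := by omega
    refine Prod.ext ?_ ?_ <;>
      simp [h1, h2, List.eq_nil_of_length_eq_zero this.1,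
        List.eq_nil_of_length_eq_zero this.2]
  · refine Prod.ext ?_ (h1.trans h2.symm)
    rw [h1] at e1; rw [h2] at e2
    exact (List.append_left_inj _).1 (e1.symm.trans e2)

lemma ldAct_inj {h h' : LD A} {p : Word A × Word A}
    (hH : h.inHA) (hH' : h'.inHA)
    (heq : ldAct h p = ldAct h' p) (hs : (ldAct h p).isSome) : h = h' := by
  cases h with
  | none => rw [ldAct_none] at hs; simp at hs
  | some hh =>
    cases h' with
    | none => rw [ldAct_none] at heq; rw [heq] at hs; simp at hs
    | some hh' =>
      rw [show hh = (hh.1, hh.2) from rfl, show p = (p.1, p.2) from rfl,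
        ldAct_some] at heq hs
      rw [show hh' = (hh'.1, hh'.2) from rfl, ldAct_some] at heq
      exact congrArg some (ld_inj (hH _ rfl) (hH' _ rfl) heq hs)


noncomputable def step : (LD A × LD A) → SqLbl A → LD A × LD A :=
  fun h l => lddAct h (l.1, l.2.1)

lemma dval_eq_foldl (ls : List (SqLbl A)) :
    dval ls = ls.foldl step (some ([], []), some ([], [])) := rfl

lemma foldl_step_fst (ls : List (SqLbl A)) (h : LD A × LD A) :
    (ls.foldl step h).1 = (ls.map fun l => (l.1.1, l.2.1.1)).foldl ldAct h.1 := by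
  induction ls generalizing h with
  | nil => rfl
  | cons l ls ih => rw [List.foldl_cons, ih, List.map_cons, List.foldl_cons]; rfl

lemma foldl_step_snd (ls : List (SqLbl A)) (h : LD A × LD A) :
    (ls.foldl step h).2 = (ls.map fun l => (l.1.2, l.2.1.2)).foldl ldAct h.2 := by
  induction ls generalizing h with
  | nil => rfl
  | cons l ls ih => rw [List.foldl_cons, ih, List.map_cons, List.foldl_cons]; rfl

lemma ld_nil_nil : (ld ([] : Word A) ([] : Word A)) = some ([], []) := by simp [ld]

lemma dval_fst (ls : List (SqLbl A)) :
    (dval ls).1 = ld ((ls.map fun l => l.1.1).flatten)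
      ((ls.map fun l => l.2.1.1).flatten) := by
  rw [dval_eq_foldl, foldl_step_fst]
  show (ls.map fun l => (l.1.1, l.2.1.1)).foldl ldAct (some ([], [])) = _
  rw [← ld_nil_nil, foldl_ldAct]
  simp [List.map_map, Function.comp_def]

lemma dval_snd (ls : List (SqLbl A)) :
    (dval ls).2 = ld ((ls.map fun l => l.1.2).flatten)
      ((ls.map fun l => l.2.1.2).flatten) := by
  rw [dval_eq_foldl, foldl_step_snd]
  show (ls.map fun l => (l.1.2, l.2.1.2)).foldl ldAct (some ([], [])) = _
  rw [← ld_nil_nil, foldl_ldAct]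
  simp [List.map_map, Function.comp_def]

lemma dval_fst_inHA (ls : List (SqLbl A)) : (dval ls).1.inHA := by
  rw [dval_fst]; exact ld_inHA _ _

lemma dval_snd_inHA (ls : List (SqLbl A)) : (dval ls).2.inHA := by
  rw [dval_snd]; exact ld_inHA _ _

lemma dval_append (ls ms : List (SqLbl A)) :
    dval (ls ++ ms) = ms.foldl step (dval ls) := by
  rw [dval_eq_foldl, dval_eq_foldl, List.foldl_append]

lemma foldl_ldAct_none (ps : List (Word A × Word A)) :
    ps.foldl ldAct none = none := by
  induction ps with
  | nil => rfl
  | cons p ps ih => rw [List.foldl_cons, ldAct_none]; exact ih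

lemma fold_fst_none {h : LD A × LD A} (ms : List (SqLbl A)) (hc : h.1 = none) :
    (ms.foldl step h).1 = none := by
  rw [foldl_step_fst, hc]; exact foldl_ldAct_none _

lemma fold_snd_none {h : LD A × LD A} (ms : List (SqLbl A)) (hc : h.2 = none) :
    (ms.foldl step h).2 = none := by
  rw [foldl_step_snd, hc]; exact foldl_ldAct_none _

lemma foldl_step_inj : ∀ (ms : List (SqLbl A)) (h h' : LD A × LD A),
    h.1.inHA → h.2.inHA → h'.1.inHA → h'.2.inHA →
    ms.foldl step h = ms.foldl step h' →
    (ms.foldl step h).1.isSome → (ms.foldl step h).2.isSome → h = h' := by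
  intro ms
  induction ms with
  | nil => intro h h' _ _ _ _ heq _ _; exact heq
  | cons m ms ih =>
    intro h h' hH1 hH2 hH1' hH2' heq hs1 hs2
    rw [List.foldl_cons] at heq hs1 hs2
    have hstep : step h m = step h' m :=
      ih _ _ (ldAct_inHA _ _) (ldAct_inHA _ _) (ldAct_inHA _ _) (ldAct_inHA _ _)
        heq hs1 hs2
    have s1 : (step h m).1.isSome := by
      by_contra hc
      rw [Option.not_isSome_iff_eq_none] at hc
      rw [fold_fst_none ms hc] at hs1
      simp at hs1
    have s2 : (step h m).2.isSome := by
      by_contra hc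
      rw [Option.not_isSome_iff_eq_none] at hc
      rw [fold_snd_none ms hc] at hs2
      simp at hs2
    have e1 : ldAct h.1 (m.1.1, m.2.1.1) = ldAct h'.1 (m.1.1, m.2.1.1) :=
      congrArg Prod.fst hstep
    have e2 : ldAct h.2 (m.1.2, m.2.1.2) = ldAct h'.2 (m.1.2, m.2.1.2) :=
      congrArg Prod.snd hstep
    exact Prod.ext (ldAct_inj hH1 hH1' e1 s1) (ldAct_inj hH2 hH2' e2 s2)

def fstLbl (l : SqLbl A) : Word A × Word A × Word A := (l.1.1, l.1.2, [l.2.2])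
def sndLbl (l : SqLbl A) : Word A × Word A × Word A := (l.2.1.1, l.2.1.2, [l.2.2])

lemma sqPath_append {S : Spliffer A} {p r t : S.Q × S.Q} {ls ms : List (SqLbl A)}
    (h1 : SqPath S p ls r) (h2 : SqPath S r ms t) : SqPath S p (ls ++ ms) t := by
  induction h1 with
  | nil => exact h2
  | cons e _ ih => exact SqPath.cons e (ih h2)

lemma unzip {S : Spliffer A} {p r : S.Q × S.Q} {sls : List (SqLbl A)}
    (h : SqPath S p sls r) :
    S.Path p.1 (sls.map fstLbl) r.1 ∧ S.Path p.2 (sls.map sndLbl) r.2 := by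
  induction h with
  | nil => exact ⟨Spliffer.Path.nil _, Spliffer.Path.nil _⟩
  | cons e _ ih => exact ⟨Spliffer.Path.cons e.1 ih.1, Spliffer.Path.cons e.2 ih.2⟩

lemma input_singleton {l : Word A × Word A × Word A} (h : l ∈ genG A) :
    ∃ a, l.2.2 = [a] := by
  obtain ⟨a, h | h⟩ := h <;> exact ⟨a, by rw [h]⟩

lemma prodTriple_fst (sls : List (SqLbl A)) :
    prodTriple (sls.map fstLbl) = ((sls.map fun l => l.1.1).flatten,
      (sls.map fun l => l.1.2).flatten, (sls.map fun l => [l.2.2]).flatten) := by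
  simp [prodTriple, fstLbl, List.map_map, Function.comp_def]

lemma prodTriple_snd (sls : List (SqLbl A)) :
    prodTriple (sls.map sndLbl) = ((sls.map fun l => l.2.1.1).flatten,
      (sls.map fun l => l.2.1.2).flatten, (sls.map fun l => [l.2.2]).flatten) := by
  simp [prodTriple, sndLbl, List.map_map, Function.comp_def]

lemma zip {S : Spliffer A} {ls₁ : List (Word A × Word A × Word A)} {q₁ t₁ : S.Q}
    (P1 : S.Path q₁ ls₁ t₁) :
    ∀ {q₂ t₂ : S.Q} {ls₂ : List (Word A × Word A × Word A)}, S.Path q₂ ls₂ t₂ →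
    (ls₁.map fun l => l.2.2).flatten = (ls₂.map fun l => l.2.2).flatten →
    ∃ sls : List (SqLbl A), SqPath S (q₁, q₂) sls (t₁, t₂) ∧
      sls.map fstLbl = ls₁ ∧ sls.map sndLbl = ls₂ := by
  induction P1 with
  | nil q =>
    intro q₂ t₂ ls₂ P2 hflat
    cases P2 with
    | nil => exact ⟨[], SqPath.nil _, rfl, rfl⟩
    | @cons _ _ _ l₂ ls₂' e₂ p₂ =>
      obtain ⟨a, ha⟩ := input_singleton (S.labels_mem e₂)
      simp [ha] at hflat
  | @cons q qm t₁' l ls e p' ih =>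
    intro q₂ t₂ ls₂ P2 hflat
    obtain ⟨a₁, ha₁⟩ := input_singleton (S.labels_mem e)
    cases P2 with
    | nil => simp [ha₁] at hflat
    | @cons _ qm₂ _ l₂ ls₂' e₂ p₂ =>
      obtain ⟨a₂, ha₂⟩ := input_singleton (S.labels_mem e₂)
      rw [List.map_cons, List.map_cons, List.flatten_cons, List.flatten_cons,
        ha₁, ha₂] at hflat
      simp only [List.cons_append, List.nil_append, List.cons.injEq] at hflat
      obtain ⟨hae, hfl⟩ := hflat
      subst hae
      obtain ⟨sls, hs, hm1, hm2⟩ := ih p₂ hfl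
      have hl1 : (l.1, l.2.1, [a₁]) = l := by rw [← ha₁]
      have hl2 : (l₂.1, l₂.2.1, [a₁]) = l₂ := by rw [← ha₂]
      refine ⟨((l.1, l.2.1), (l₂.1, l₂.2.1), a₁) :: sls,
        SqPath.cons ⟨?_, ?_⟩ hs, ?_, ?_⟩
      · show S.E q (l.1, l.2.1, [a₁]) qm; rw [hl1]; exact e
      · show S.E q₂ (l₂.1, l₂.2.1, [a₁]) qm₂; rw [hl2]; exact e₂
      · rw [List.map_cons, hm1]
        show (l.1, l.2.1, [a₁]) :: ls = l :: ls
        rw [hl1]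
      · rw [List.map_cons, hm2]
        show (l₂.1, l₂.2.1, [a₁]) :: ls₂' = l₂ :: ls₂'
        rw [hl2]

end FunChar

/-- a splitter `S` is functional iff, in the trim part `𝒜` of the
square automaton `S × S`, (i) all paths from an initial state to a given state
have the same `Δ`-value (so `𝒜 × Δ` is a valuation), and (ii) the value of every
final state is `((ε,ε),(ε,ε))`. -/
theorem functionality_characterization {A : Type} [Finite A] (S : Spliffer A) :
    (∀ u₁ v₁ u₂ v₂ s : Word A, (u₁, v₁, s) ∈ S.behavior → (u₂, v₂, s) ∈ S.behavior →
      u₁ = u₂ ∧ v₁ = v₂) ↔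
    ((∀ p, sqTrim S p → ∀ i₁ ls₁ i₂ ls₂, sqInit S i₁ → sqInit S i₂ →
        SqPath S i₁ ls₁ p → SqPath S i₂ ls₂ p → dval ls₁ = dval ls₂) ∧
      (∀ t, sqTrim S t → sqFinal S t → ∀ i ls, sqInit S i → SqPath S i ls t →
        dval ls = (some (([], []) : Word A × Word A),
          some (([], []) : Word A × Word A)))) := by
  constructor
  · intro hfun
    have key2 : ∀ t, sqFinal S t → ∀ i ls, sqInit S i → SqPath S i ls t →
        dval ls = (some (([], []) : Word A × Word A),
          some (([], []) : Word A × Word A)) := by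
      intro t hfin i ls hinit hpath
      obtain ⟨P1, P2⟩ := FunChar.unzip hpath
      have m1 : ((ls.map fun l => l.1.1).flatten, (ls.map fun l => l.1.2).flatten,
          (ls.map fun l => [l.2.2]).flatten) ∈ S.behavior :=
        ⟨i.1, hinit.1, t.1, hfin.1, ls.map FunChar.fstLbl, P1,
          FunChar.prodTriple_fst ls⟩
      have m2 : ((ls.map fun l => l.2.1.1).flatten,
          (ls.map fun l => l.2.1.2).flatten,
          (ls.map fun l => [l.2.2]).flatten) ∈ S.behavior :=
        ⟨i.2, hinit.2, t.2, hfin.2, ls.map FunChar.sndLbl, P2,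
          FunChar.prodTriple_snd ls⟩
      obtain ⟨hu, hv⟩ := hfun _ _ _ _ _ m1 m2
      refine Prod.ext ?_ ?_
      · rw [FunChar.dval_fst, hu, FunChar.ld_self]
      · rw [FunChar.dval_snd, hv, FunChar.ld_self]
    refine ⟨?_, fun t _ hfin i ls hinit hp => key2 t hfin i ls hinit hp⟩
    intro p hp i₁ ls₁ i₂ ls₂ hi₁ hi₂ h₁ h₂
    obtain ⟨-, t, htfin, ms, hms⟩ := hp
    have e₁ := key2 t htfin i₁ (ls₁ ++ ms) hi₁ (FunChar.sqPath_append h₁ hms)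
    have e₂ := key2 t htfin i₂ (ls₂ ++ ms) hi₂ (FunChar.sqPath_append h₂ hms)
    rw [FunChar.dval_append] at e₁ e₂
    exact FunChar.foldl_step_inj ms _ _ (FunChar.dval_fst_inHA _)
      (FunChar.dval_snd_inHA _) (FunChar.dval_fst_inHA _) (FunChar.dval_snd_inHA _)
      (e₁.trans e₂.symm) (by rw [e₁]; rfl) (by rw [e₁]; rfl)
  · rintro ⟨-, key2⟩ u₁ v₁ u₂ v₂ s ⟨q₁, hq₁, t₁, ht₁, ls₁, P₁, hp₁⟩
      ⟨q₂, hq₂, t₂, ht₂, ls₂, P₂, hp₂⟩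
    have hin : (ls₁.map fun l => l.2.2).flatten = (ls₂.map fun l => l.2.2).flatten := by
      have h1 := congrArg (fun m => m.2.2) hp₁
      have h2 := congrArg (fun m => m.2.2) hp₂
      exact h1.trans h2.symm
    obtain ⟨sls, hsq, hm1, hm2⟩ := FunChar.zip P₁ P₂ hin
    have htrim : sqTrim S (t₁, t₂) :=
      ⟨⟨(q₁, q₂), ⟨hq₁, hq₂⟩, sls, hsq⟩, ⟨(t₁, t₂), ⟨ht₁, ht₂⟩, [], SqPath.nil _⟩⟩
    have hdv := key2 (t₁, t₂) htrim ⟨ht₁, ht₂⟩ (q₁, q₂) sls ⟨hq₁, hq₂⟩ hsq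
    have hU : (sls.map fun l => l.1.1).flatten = (sls.map fun l => l.2.1.1).flatten := by
      apply FunChar.ld_eq_eps
      rw [← FunChar.dval_fst, hdv]
    have hV : (sls.map fun l => l.1.2).flatten = (sls.map fun l => l.2.1.2).flatten := by
      apply FunChar.ld_eq_eps
      rw [← FunChar.dval_snd, hdv]
    have eu1 : u₁ = (sls.map fun l => l.1.1).flatten := by
      have h := congrArg (fun m => m.1) ((hm1 ▸ FunChar.prodTriple_fst sls :
        prodTriple ls₁ = _).symm.trans hp₁)
      exact h.symm
    have ev1 : v₁ = (sls.map fun l => l.1.2).flatten := by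
      have h := congrArg (fun m => m.2.1) ((hm1 ▸ FunChar.prodTriple_fst sls :
        prodTriple ls₁ = _).symm.trans hp₁)
      exact h.symm
    have eu2 : u₂ = (sls.map fun l => l.2.1.1).flatten := by
      have h := congrArg (fun m => m.1) ((hm2 ▸ FunChar.prodTriple_snd sls :
        prodTriple ls₂ = _).symm.trans hp₂)
      exact h.symm
    have ev2 : v₂ = (sls.map fun l => l.2.1.2).flatten := by
      have h := congrArg (fun m => m.2.1) ((hm2 ▸ FunChar.prodTriple_snd sls :
        prodTriple ls₂ = _).symm.trans hp₂)
      exact h.symm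
    exact ⟨eu1.trans (hU.trans eu2.symm), ev1.trans (hV.trans ev2.symm)⟩
end
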